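/- Let θ = α + β·q^{1/4} > 0 where α, β are rationals with β ≠ 0 and q > 1 is a squarefree integer. Then there is no point in the plane of the equilateral triangle of side θ at rational distance from all three vertices. -/

import Mathlib

/-!
If a point is at distances `a, b, c` from the vertices of an equilateral triangle of side `θ`,
then `T = θ²` satisfies `T² - (a² + b² + c²) T + (a⁴ + b⁴ + c⁴ - a²b² - b²c² - c²a²) = 0`
(the Gram determinant of three plane vectors vanishes). So if the distances are rational, `θ²`
is a root of a rational quadratic with nonzero middle coefficient. For `θ = α + β t` with
`t = q^{1/4}` this is impossible: if `α = 0` the middle coefficient would have to vanish, and if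
`α ≠ 0` the equation reads `t (W + Z t²) = U + V t²` over `ℚ` with `Z = 4αβ³ ≠ 0`. Squaring and
applying the conjugation `√q ↦ -√q` of `ℚ(√q)` gives `-√q (W - Z √q)² = (U - V √q)²`, forcing
`W = Z √q`, against the irrationality of `√q`.
-/

noncomputable section

abbrev Pt := EuclideanSpace ℝ (Fin 2)

def IsRat (x : ℝ) : Prop := ∃ q : ℚ, (q : ℝ) = x

/-- `θ` is "good": some point of the plane is at rational distance from all
vertices of an equilateral triangle of side length `θ`. -/
def Good (θ : ℝ) : Prop :=
  ∃ A B C M : Pt, dist A B = θ ∧ dist B C = θ ∧ dist C A = θ ∧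
    IsRat (dist M A) ∧ IsRat (dist M B) ∧ IsRat (dist M C)

open Module Matrix
open scoped InnerProductSpace

section Planar

variable {E : Type*} [NormedAddCommGroup E] [InnerProductSpace ℝ E] [FiniteDimensional ℝ E]

theorem det_gram_fin_three_eq_zero (hE : finrank ℝ E ≤ 2) (v : Fin 3 → E) :
    (gram ℝ v).det = 0 := by
  by_contra h
  have := (linearIndependent_of_det_gram_ne_zero h).fintype_card_le_finrank
  rw [Fintype.card_fin] at this
  omega

theorem equilateral_dist_relation (hE : finrank ℝ E ≤ 2) {A B C M : E} {θ : ℝ}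
    (hAB : dist A B = θ) (hBC : dist B C = θ) (hCA : dist C A = θ) :
    (θ ^ 2) ^ 2 - (dist M A ^ 2 + dist M B ^ 2 + dist M C ^ 2) * θ ^ 2
      + (dist M A ^ 4 + dist M B ^ 4 + dist M C ^ 4 - dist M A ^ 2 * dist M B ^ 2
        - dist M B ^ 2 * dist M C ^ 2 - dist M C ^ 2 * dist M A ^ 2) = 0 := by
  rcases eq_or_ne θ 0 with rfl | hθ
  · obtain rfl : A = B := dist_eq_zero.1 hAB
    obtain rfl : C = A := dist_eq_zero.1 hCA
    ring
  set u := B - A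
  set v := C - A
  set w := M - A
  have hu : ‖u‖ = θ := by rw [← dist_eq_norm, dist_comm, hAB]
  have hv : ‖v‖ = θ := by rw [← dist_eq_norm, hCA]
  have hMA : dist M A = ‖w‖ := dist_eq_norm M A
  have hMB : dist M B = ‖w - u‖ := by rw [sub_sub_sub_cancel_right, dist_eq_norm]
  have hMC : dist M C = ‖w - v‖ := by rw [sub_sub_sub_cancel_right, dist_eq_norm]
  have huv : ⟪u, v⟫_ℝ = θ ^ 2 / 2 := by
    have := norm_sub_sq_real u v
    rw [sub_sub_sub_cancel_right, ← dist_eq_norm, hBC, hu, hv] at this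
    linarith
  have huw : ⟪u, w⟫_ℝ = (‖w‖ ^ 2 + θ ^ 2 - ‖w - u‖ ^ 2) / 2 := by
    have := norm_sub_sq_real w u
    rw [hu, real_inner_comm] at this
    linarith
  have hvw : ⟪v, w⟫_ℝ = (‖w‖ ^ 2 + θ ^ 2 - ‖w - v‖ ^ 2) / 2 := by
    have := norm_sub_sq_real w v
    rw [hv, real_inner_comm] at this
    linarith
  have hgram := det_gram_fin_three_eq_zero hE ![u, v, w]
  simp only [det_fin_three, gram_apply, cons_val_zero, cons_val_one, cons_val,
    real_inner_self_eq_norm_sq] at hgram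
  rw [real_inner_comm u w, real_inner_comm v w, real_inner_comm u v, hu, hv, huv, huw, hvw]
    at hgram
  rw [hMA, hMB, hMC]
  refine (mul_eq_zero.1 ?_).resolve_left (pow_ne_zero 2 hθ)
  linear_combination (-4) * hgram

end Planar

theorem Squarefree.not_isSquare {R : Type*} [Monoid R] {r : R} (h : Squarefree r)
    (hr : ¬IsUnit r) : ¬IsSquare r := by
  rintro ⟨k, rfl⟩
  exact hr ((h k dvd_rfl).mul (h k dvd_rfl))

theorem Squarefree.irrational_sqrt {q : ℤ} (hsf : Squarefree q) (hq : 1 < q) : Irrational √q := by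
  rw [irrational_sqrt_intCast_iff]
  exact ⟨hsf.not_isSquare (by rw [Int.isUnit_iff]; omega), by omega⟩

namespace Irrational

variable {u : ℝ}

theorem eq_zero_of_ratCast_add_ratCast_mul_eq_zero (hu : Irrational u) {a b : ℚ}
    (h : (a : ℝ) + b * u = 0) : a = 0 ∧ b = 0 := by
  have hb : b = 0 := by
    by_contra hb
    exact not_irrational_zero (h ▸ (hu.ratCast_mul hb).ratCast_add a)
  refine ⟨?_, hb⟩
  simpa [hb] using h

theorem eq_zero_of_mul_sq_eq_sq (hu : Irrational u) (hu0 : 0 ≤ u) {q : ℚ} (hq : u ^ 2 = q)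
    {U V W Z : ℚ} (h : u * (W + Z * u) ^ 2 = (U + V * u) ^ 2) : W = 0 ∧ Z = 0 := by
  obtain ⟨h0, h1⟩ := hu.eq_zero_of_ratCast_add_ratCast_mul_eq_zero
    (a := 2 * W * Z * q - U ^ 2 - V ^ 2 * q) (b := W ^ 2 + Z ^ 2 * q - 2 * U * V)
    (by push_cast; linear_combination h - ((Z : ℝ) ^ 2 * u + 2 * W * Z - V ^ 2) * hq)
  have h0' : (2 * W * Z * q - U ^ 2 - V ^ 2 * q : ℝ) = 0 := by exact_mod_cast h0
  have h1' : (W ^ 2 + Z ^ 2 * q - 2 * U * V : ℝ) = 0 := by exact_mod_cast h1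
  -- the conjugate equation `-u (W - Z u)² = (U - V u)²`
  have hconj : (U - V * u) ^ 2 + u * (W - Z * u) ^ 2 = 0 := by
    linear_combination -h0' + u * h1' + ((V : ℝ) ^ 2 - 2 * W * Z + Z ^ 2 * u) * hq
  have hWZ : u * (W - Z * u) ^ 2 = 0 := by
    linarith [sq_nonneg ((U : ℝ) - V * u), mul_nonneg hu0 (sq_nonneg ((W : ℝ) - Z * u))]
  have hlin : (W : ℝ) + ((-Z : ℚ) : ℝ) * u = 0 := by
    push_cast
    linear_combination (pow_eq_zero_iff two_ne_zero).1 ((mul_eq_zero.1 hWZ).resolve_left hu.ne_zero)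
  simpa using hu.eq_zero_of_ratCast_add_ratCast_mul_eq_zero hlin

theorem eq_zero_of_mul_eq_ratCast_add_ratCast_mul {t : ℝ} (ht : Irrational (t ^ 2)) {q : ℚ}
    (hq : t ^ 4 = q) {U V W Z : ℚ} (h : t * (W + Z * t ^ 2) = U + V * t ^ 2) : W = 0 ∧ Z = 0 :=
  ht.eq_zero_of_mul_sq_eq_sq (sq_nonneg t) (by rw [← hq]; ring) (by rw [← h]; ring)

end Irrational

theorem quadratic_ne_zero_of_sq_add_mul {t : ℝ} (ht : Irrational (t ^ 2)) {q : ℚ}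
    (hq : t ^ 4 = q) {α β s c : ℚ} (hβ : β ≠ 0) (hs : s ≠ 0) :
    ((α + β * t) ^ 2) ^ 2 - s * (α + β * t) ^ 2 + c ≠ 0 := by
  intro h
  rcases eq_or_ne α 0 with rfl | hα
  · obtain ⟨-, h1⟩ := ht.eq_zero_of_ratCast_add_ratCast_mul_eq_zero
      (a := β ^ 4 * q + c) (b := -(s * β ^ 2)) (by push_cast; linear_combination h - β ^ 4 * hq)
    simp [hs, hβ] at h1
  · -- odd and even parts in `t` of the equation `h`
    have hZ := (ht.eq_zero_of_mul_eq_ratCast_add_ratCast_mul hq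
      (W := 4 * α ^ 3 * β - 2 * s * α * β) (Z := 4 * α * β ^ 3)
      (U := -(α ^ 4 + β ^ 4 * q - s * α ^ 2 + c)) (V := s * β ^ 2 - 6 * α ^ 2 * β ^ 2)
      (by push_cast; linear_combination h - β ^ 4 * hq)).2
    simp [hα, hβ] at hZ

theorem stmt_19 (q : ℤ) (hq : 1 < q) (hsf : Squarefree q) (α β : ℚ) (hβ : β ≠ 0)
    (θ : ℝ) (hθdef : θ = (α : ℝ) + (β : ℝ) * (q : ℝ) ^ ((1 : ℝ) / 4)) (hθ : 0 < θ) :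
    ¬ Good θ := by
  rintro ⟨A, B, C, M, hAB, hBC, hCA, ⟨a, ha⟩, ⟨b, hb⟩, ⟨c, hc⟩⟩
  have hrel := equilateral_dist_relation (M := M) (by rw [finrank_euclideanSpace_fin]) hAB hBC hCA
  set t := (q : ℝ) ^ ((1 : ℝ) / 4)
  have hq0 : (0 : ℝ) ≤ q := by exact_mod_cast (by omega : 0 ≤ q)
  have ht2 : t ^ 2 = √q := by
    rw [Real.sqrt_eq_rpow, ← Real.rpow_natCast, ← Real.rpow_mul hq0]
    norm_num
  have ht4 : t ^ 4 = ((q : ℚ) : ℝ) := by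
    rw [show t ^ 4 = (t ^ 2) ^ 2 by ring, ht2, Real.sq_sqrt hq0, Rat.cast_intCast]
  have hs : a ^ 2 + b ^ 2 + c ^ 2 ≠ 0 := by
    have hab := dist_triangle_left A B M
    rw [hAB, ← ha, ← hb] at hab
    intro h0
    have h0' : (a : ℝ) ^ 2 + b ^ 2 + c ^ 2 = 0 := by exact_mod_cast h0
    nlinarith [sq_nonneg ((a : ℝ) - b), sq_nonneg (c : ℝ)]
  rw [← ha, ← hb, ← hc, hθdef] at hrel
  exact quadratic_ne_zero_of_sq_add_mul (α := α) (ht2 ▸ hsf.irrational_sqrt hq) ht4 hβ hs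
    (c := a ^ 4 + b ^ 4 + c ^ 4 - a ^ 2 * b ^ 2 - b ^ 2 * c ^ 2 - c ^ 2 * a ^ 2)
    (by push_cast; linear_combination hrel)
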